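/- arXiv:1404.5206 — 2 statements merged into one kernel-verified Lean document; each statement's English description precedes it below -/
import Mathlib

section
/- Let φ be a Schwartz function on ℝ, m ≥ 1, k > −m, and c : ℝ^m \ {0} → ℝ smooth and homogeneous of degree k. With a the cutoff equal to 0 on |t|<1 and 1 on |t|>2, one has ε^{m+k} ∫_{ℝ^m} a(|ξ|) φ(ε|ξ|) c(ξ) dξ → ĉ · ∫_0^∞ φ(s) s^{k+m−1} ds as ε → 0, where ĉ = ∫_{|ξ|=1} c(ξ) dS(ξ). -/
open MeasureTheory Filter
open Set Metric

lemma polar_step {E : Type*} [NormedAddCommGroup E] [NormedSpace ℝ E] [MeasurableSpace E]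
    [BorelSpace E] [FiniteDimensional ℝ E] [Nontrivial E] (μ : Measure E) [μ.IsAddHaarMeasure]
    (c : E → ℝ) (g : ℝ → ℝ) (k : ℤ)
    (hhom : ∀ t : ℝ, 0 < t → ∀ ξ : E, ξ ≠ 0 → c (t • ξ) = t ^ k * c ξ) :
    ∫ ξ, g ‖ξ‖ * c ξ ∂μ =
      (∫ ξ : sphere (0 : E) 1, c ξ ∂μ.toSphere) *
        ∫ t in Ioi (0:ℝ), t ^ (Module.finrank ℝ E - 1) * (g t * t ^ k) := by
  have h1 : (∫ ξ, g ‖ξ‖ * c ξ ∂μ) =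
      ∫ x : ({0}ᶜ : Set E), g ‖(x:E)‖ * c x ∂(μ.comap Subtype.val) := by
    rw [integral_subtype_comap (measurableSet_singleton (0:E)).compl
      (fun ξ => g ‖ξ‖ * c ξ), restrict_compl_singleton]
  set G : sphere (0:E) 1 × Ioi (0:ℝ) → ℝ := fun y => c y.1 * (g y.2 * (y.2:ℝ) ^ k) with hG
  have h2 : ∫ x : ({0}ᶜ : Set E), g ‖(x:E)‖ * c x ∂(μ.comap Subtype.val) =
      ∫ y, G y ∂(μ.toSphere.prod (.volumeIoiPow (Module.finrank ℝ E - 1))) := by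
    rw [← (μ.measurePreserving_homeomorphUnitSphereProd).integral_comp
      (Homeomorph.measurableEmbedding _) G]
    refine integral_congr_ae (Eventually.of_forall fun x => ?_)
    have hx : (x : E) ≠ 0 := x.2
    have hnorm : (0:ℝ) < ‖(x:E)‖ := norm_pos_iff.2 hx
    have hunit : ‖(x:E)‖⁻¹ • (x:E) ≠ 0 := smul_ne_zero (inv_ne_zero hnorm.ne') hx
    have hkey := hhom ‖(x:E)‖ hnorm (‖(x:E)‖⁻¹ • (x:E)) hunit
    rw [smul_inv_smul₀ hnorm.ne'] at hkey
    simp only [hG, homeomorphUnitSphereProd_apply_fst_coe, homeomorphUnitSphereProd_apply_snd_coe]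
    rw [hkey]; ring
  have h3 : ∫ y, G y ∂(μ.toSphere.prod (.volumeIoiPow (Module.finrank ℝ E - 1))) =
      (∫ ξ : sphere (0:E) 1, c ξ ∂μ.toSphere) *
        ∫ r : Ioi (0:ℝ), g r * (r:ℝ) ^ k ∂(Measure.volumeIoiPow (Module.finrank ℝ E - 1)) :=
    integral_prod_mul (fun ω : sphere (0:E) 1 => c ω) (fun r : Ioi (0:ℝ) => g ↑r * (r:ℝ) ^ k)
  have h4 : ∫ r : Ioi (0:ℝ), g r * (r:ℝ) ^ k ∂(Measure.volumeIoiPow (Module.finrank ℝ E - 1)) =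
      ∫ t in Ioi (0:ℝ), t ^ (Module.finrank ℝ E - 1) * (g t * t ^ k) := by
    simp only [Measure.volumeIoiPow, ENNReal.ofReal]
    rw [integral_withDensity_eq_integral_smul
      ((measurable_subtype_coe.pow_const _).real_toNNReal),
      integral_subtype_comap measurableSet_Ioi
        (fun t => Real.toNNReal (t ^ (Module.finrank ℝ E - 1)) • (g t * t ^ k))]
    refine setIntegral_congr_fun measurableSet_Ioi fun t ht => ?_
    rw [NNReal.smul_def, Real.coe_toNNReal _ (pow_nonneg ht.out.le _), smul_eq_mul]
  rw [h1, h2, h3, h4]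

lemma scale_step (a : ℝ → ℝ) (φ : SchwartzMap ℝ ℝ) (p : ℕ) {ε : ℝ} (hε : 0 < ε) :
    ∫ s in Ioi (0:ℝ), a (s/ε) * φ s * s ^ p =
      ε ^ (p+1) * ∫ t in Ioi (0:ℝ), a t * φ (ε * t) * t ^ p := by
  have h := integral_comp_mul_left_Ioi (fun s => a (s/ε) * φ s * s ^ p) 0 hε
  simp only [mul_zero] at h
  have h2 : ∫ x in Ioi (0:ℝ), a (ε * x / ε) * φ (ε * x) * (ε * x) ^ p =
      ε ^ p * ∫ t in Ioi (0:ℝ), a t * φ (ε * t) * t ^ p := by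
    rw [← integral_const_mul]
    refine setIntegral_congr_fun measurableSet_Ioi fun t ht => ?_
    rw [mul_div_cancel_left₀ _ hε.ne', mul_pow]
    ring
  rw [h2] at h
  have := h.symm
  field_simp at this ⊢
  rw [smul_eq_mul, one_div, inv_mul_eq_iff_eq_mul₀ hε.ne'] at this
  rw [this]; ring

lemma limit_step (a : ℝ → ℝ) (ha_cont : Continuous a)
    (ha1 : ∀ t : ℝ, 2 < |t| → a t = 1) (φ : SchwartzMap ℝ ℝ) (p : ℕ) :
    Filter.Tendsto (fun ε : ℝ => ∫ s in Ioi (0:ℝ), a (s/ε) * φ s * s ^ p)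
      (nhdsWithin 0 (Ioi 0)) (nhds (∫ s in Ioi (0:ℝ), φ s * s ^ p)) := by
  obtain ⟨C, hC⟩ := (isCompact_Icc (a := (-2:ℝ)) (b := 2)).exists_bound_of_continuousOn
    ha_cont.continuousOn
  set M : ℝ := max C 1 with hM
  have hMb : ∀ t : ℝ, ‖a t‖ ≤ M := by
    intro t
    by_cases h : |t| ≤ 2
    · exact le_max_of_le_left (hC t (abs_le.1 h))
    · rw [ha1 t (lt_of_not_ge h)]; simp [hM]
  refine tendsto_integral_filter_of_dominated_convergence
    (fun s => M * (‖s‖ ^ p * ‖φ s‖)) ?_ ?_ ?_ ?_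
  · exact Eventually.of_forall fun ε =>
      (((ha_cont.comp (continuous_id.div_const ε)).mul φ.continuous).mul
        (continuous_pow p)).aestronglyMeasurable
  · refine Eventually.of_forall fun ε => Eventually.of_forall fun s => ?_
    rw [norm_mul, norm_mul, norm_pow]
    calc ‖a (s/ε)‖ * ‖φ s‖ * ‖s‖ ^ p ≤ M * ‖φ s‖ * ‖s‖ ^ p := by
          gcongr; exact hMb _
      _ = M * (‖s‖ ^ p * ‖φ s‖) := by ring
  · exact ((φ.integrable_pow_mul volume p).const_mul M).restrict
  · refine (ae_restrict_iff' measurableSet_Ioi).2 (Eventually.of_forall fun s hs => ?_)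
    have hs' : (0:ℝ) < s := hs
    refine Filter.Tendsto.congr' ?_ tendsto_const_nhds
    filter_upwards [Ioo_mem_nhdsGT_of_mem (left_mem_Ico.2 (half_pos hs'))] with ε hε
    have h2 : 2 < |s/ε| := by
      rw [abs_of_pos (div_pos hs' hε.1), lt_div_iff₀ hε.1]
      linarith [hε.2]
    rw [ha1 _ h2, one_mul]


/-- Leading asymptotics: for `c` smooth on `ℝ^m \ 0`, homogeneous of degree `k > -m`,
a Schwartz function `φ` and the cutoff `a`,
`ε^{m+k} ∫ a(|ξ|) φ(ε|ξ|) c(ξ) dξ → (∫_{|ξ|=1} c dS) · ∫_0^∞ φ(s) s^{k+m-1} ds`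
as `ε → 0⁺`. -/
theorem integral_homogeneous_leading_asymptotics {m : ℕ} (hm : 1 ≤ m) (k : ℤ)
    (hk : -(m : ℤ) < k)
    (c : EuclideanSpace ℝ (Fin m) → ℝ)
    (hc : ContDiffOn ℝ (⊤ : ℕ∞) c {0}ᶜ)
    (hhom : ∀ t : ℝ, 0 < t → ∀ ξ : EuclideanSpace ℝ (Fin m), ξ ≠ 0 →
      c (t • ξ) = t ^ k * c ξ)
    (a : ℝ → ℝ) (hasm : ContDiff ℝ (⊤ : ℕ∞) a)
    (ha0 : ∀ t : ℝ, |t| < 1 → a t = 0) (ha1 : ∀ t : ℝ, 2 < |t| → a t = 1)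
    (φ : SchwartzMap ℝ ℝ) :
    Tendsto
      (fun ε : ℝ => ε ^ ((m : ℤ) + k) *
        ∫ ξ : EuclideanSpace ℝ (Fin m), a ‖ξ‖ * φ (ε * ‖ξ‖) * c ξ)
      (nhdsWithin 0 (Set.Ioi 0))
      (nhds ((∫ ξ : Metric.sphere (0 : EuclideanSpace ℝ (Fin m)) 1, c ξ
                ∂((volume : Measure (EuclideanSpace ℝ (Fin m))).toSphere)) *
             ∫ s in Set.Ioi (0 : ℝ), φ s * s ^ (k + (m : ℤ) - 1))) := by
  haveI : Nonempty (Fin m) := ⟨⟨0, hm⟩⟩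
  haveI : Nontrivial (EuclideanSpace ℝ (Fin m)) := inferInstance
  set p : ℕ := (k + (m:ℤ) - 1).toNat with hpdef
  have hp : (p : ℤ) = k + (m:ℤ) - 1 := Int.toNat_of_nonneg (by omega)
  have hdim : Module.finrank ℝ (EuclideanSpace ℝ (Fin m)) = m := finrank_euclideanSpace_fin
  set Chat : ℝ := ∫ ξ : Metric.sphere (0 : EuclideanSpace ℝ (Fin m)) 1, c ξ
      ∂((volume : Measure (EuclideanSpace ℝ (Fin m))).toSphere) with hChat
  -- rewrite the target integral with natural power
  have htarget : ∫ s in Ioi (0:ℝ), φ s * s ^ (k + (m:ℤ) - 1) =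
      ∫ s in Ioi (0:ℝ), φ s * s ^ p := by
    refine setIntegral_congr_fun measurableSet_Ioi fun s hs => ?_
    rw [← hp, zpow_natCast]
  rw [htarget]
  refine Filter.Tendsto.congr' ?_ ((limit_step a hasm.continuous ha1 φ p).const_mul Chat)
  refine Filter.eventuallyEq_of_mem self_mem_nhdsWithin fun ε hε => ?_
  have hε : (0:ℝ) < ε := hε
  have h1 : (∫ ξ : EuclideanSpace ℝ (Fin m), a ‖ξ‖ * φ (ε * ‖ξ‖) * c ξ) =
      Chat * ∫ t in Ioi (0:ℝ),
        t ^ (Module.finrank ℝ (EuclideanSpace ℝ (Fin m)) - 1) * ((a t * φ (ε * t)) * t ^ k) :=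
    polar_step volume c (fun t => a t * φ (ε * t)) k hhom
  have h2 : ∫ t in Ioi (0:ℝ),
        t ^ (Module.finrank ℝ (EuclideanSpace ℝ (Fin m)) - 1) * ((a t * φ (ε * t)) * t ^ k) =
      ∫ t in Ioi (0:ℝ), a t * φ (ε * t) * t ^ p := by
    refine setIntegral_congr_fun measurableSet_Ioi fun t ht => ?_
    have ht' : (0:ℝ) < t := ht
    rw [hdim]
    have hcast : ((m-1:ℕ):ℤ) = (m:ℤ) - 1 := by
      rw [Nat.cast_sub hm]; rfl
    have hpow : (t:ℝ) ^ k * t ^ (m-1) = t ^ p := by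
      rw [← zpow_natCast t (m-1), ← zpow_add₀ ht'.ne', ← zpow_natCast t p]
      congr 1
      rw [hcast]; omega
    rw [mul_comm, mul_assoc, hpow]
  have h3 : ((m:ℤ) + k) = ((p+1 : ℕ) : ℤ) := by omega
  have h4 : ε ^ ((m:ℤ) + k) = ε ^ (p+1) := by rw [h3, zpow_natCast]
  rw [scale_step a φ p hε, h1, h2, h4]
  ring
end

section
/- Let C(x,y) = Σ_{n=1}^N Ψ_n(x) ⊗ Ψ_n(y) be the covariance kernel of a finite orthonormal family (Ψ_n) of sections of a bundle E over M. Fix a local frame (e_α) of E and set C^{αβ}(x,y) = ⟨e^α(x), Ψ_n(x)⟩⟨e^β(y), Ψ_n(y)⟩ summed over n, with C(x) = (C^{αβ}(x,x)) assumed invertible. Then the connection coefficients of the induced subbundle connection are Γ_i(x) = ∂_{x^i}C(x,y)|_{x=y} · C(x)^{-1}; i.e., the connection induced on E by orthogonal projection from span(Ψ_n) is d − Γ in this frame. -/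
open Finset

/-- The dual evaluation embedding: the frame covector `e^α(x)` corresponds to the vector
`ι(x,α) = (Ψ n x α)_n ∈ ℝ^N = U`, for sections with frame components `Ψ n x α`. -/
def frameEmbed {m N r : ℕ} (Ψ : Fin N → (Fin m → ℝ) → (Fin r → ℝ))
    (x : Fin m → ℝ) (α : Fin r) : EuclideanSpace ℝ (Fin N) :=
  WithLp.toLp 2 (fun n => Ψ n x α)

/-- The derivative `∂_{x^i} ι(·,α)` at `x`, as a vector of `U = ℝ^N`. -/
noncomputable def frameEmbedDeriv {m N r : ℕ} (Ψ : Fin N → (Fin m → ℝ) → (Fin r → ℝ))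
    (x : Fin m → ℝ) (i : Fin m) (α : Fin r) : EuclideanSpace ℝ (Fin N) :=
  WithLp.toLp 2 (fun n => fderiv ℝ (fun z => Ψ n z α) x (Pi.single i 1))

/-- Connection coefficients from the covariance kernel.  Work in a local chart and a
local frame `(e_α)` of `E`: the orthonormal family `(Ψ_n)_{n<N}` of sections is encoded
by its frame components `Ψ n x α = ⟨e^α(x), Ψ_n(x)⟩`.  With covariance kernel
`C^{αβ}(x,y) = Σ_n Ψ n x α · Ψ n y β` and `C(x) = C(x,x)` invertible, the connection
induced by orthogonal projection from `U = ℝ^N` has coefficients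
`Γ_i(x) = ∂_{x^i} C(x,y)|_{x=y} · C(x)⁻¹`: the orthogonal projection of
`∂_{x^i} ι(·,α)` onto `span{ι(x,γ)}` equals `Σ_γ Γ_i(x)_{αγ} ι(x,γ)`. -/
theorem induced_connection_coefficients {m N r : ℕ}
    (Ψ : Fin N → (Fin m → ℝ) → (Fin r → ℝ))
    (hΨ : ∀ n α, ContDiff ℝ (⊤ : ℕ∞) (fun x => Ψ n x α))
    (C : (Fin m → ℝ) → (Fin m → ℝ) → Matrix (Fin r) (Fin r) ℝ)
    (hC : ∀ x y α β, C x y α β = ∑ n, Ψ n x α * Ψ n y β)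
    (hCinv : ∀ x, IsUnit (C x x)) :
    ∀ (x : Fin m → ℝ) (i : Fin m) (α : Fin r),
      ((Submodule.orthogonalProjection (Submodule.span ℝ (Set.range (frameEmbed Ψ x)))
          (frameEmbedDeriv Ψ x i α)) : EuclideanSpace ℝ (Fin N)) =
        ∑ γ : Fin r,
          (((Matrix.of fun α' β' : Fin r =>
              fderiv ℝ (fun z => ∑ n, Ψ n z α' * Ψ n x β') x (Pi.single i 1)) *
            (C x x)⁻¹) α γ) • frameEmbed Ψ x γ := by
  intro x i α
  set v : Fin r → EuclideanSpace ℝ (Fin N) := frameEmbed Ψ x with hv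
  set w : EuclideanSpace ℝ (Fin N) := frameEmbedDeriv Ψ x i α with hw
  set G : Matrix (Fin r) (Fin r) ℝ := C x x with hGdef
  set D : Matrix (Fin r) (Fin r) ℝ := Matrix.of fun α' β' : Fin r =>
      fderiv ℝ (fun z => ∑ n, Ψ n z α' * Ψ n x β') x (Pi.single i 1) with hDdef
  set c : Fin r → ℝ := fun γ => (D * G⁻¹) α γ with hc
  set p : EuclideanSpace ℝ (Fin N) := ∑ γ, c γ • v γ with hp
  have hdiff : ∀ n α', DifferentiableAt ℝ (fun z => Ψ n z α') x := fun n α' =>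
    ((hΨ n α').differentiable (by simp)).differentiableAt
  -- D row α equals inner of w with v β
  have hDrow : ∀ β, D α β = ∑ n, w n * Ψ n x β := by
    intro β
    have h1 : fderiv ℝ (fun z => ∑ n, Ψ n z α * Ψ n x β) x =
        ∑ n, fderiv ℝ (fun z => Ψ n z α * Ψ n x β) x := by
      apply fderiv_fun_sum
      intro n _
      exact (hdiff n α).mul_const _
    have h2 : ∀ n, fderiv ℝ (fun z => Ψ n z α * Ψ n x β) x =
        Ψ n x β • fderiv ℝ (fun z => Ψ n z α) x := fun n => fderiv_mul_const (hdiff n α) _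
    simp only [hDdef, Matrix.of_apply, h1, ContinuousLinearMap.sum_apply]
    refine Finset.sum_congr rfl fun n _ => ?_
    rw [h2 n]
    simp [hw, frameEmbedDeriv, mul_comm]
  -- Gram matrix
  have hGram : ∀ β γ, (∑ n, Ψ n x β * v γ n) = G β γ := by
    intro β γ
    rw [hGdef, hC]
    rfl
  -- orthogonality against each generator
  have hkey : ∀ β, (inner ℝ (w - p) (v β) : ℝ) = 0 := by
    intro β
    have hinner : (inner ℝ p (v β) : ℝ) = ∑ γ, c γ * G γ β := by
      rw [hp, sum_inner]
      refine Finset.sum_congr rfl fun γ _ => ?_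
      rw [real_inner_smul_left]
      congr 1
      rw [← hGram γ β]
      simp [PiLp.inner_apply, RCLike.inner_apply, hv, frameEmbed, mul_comm]
    have hinnerw : (inner ℝ w (v β) : ℝ) = D α β := by
      rw [hDrow β]
      simp [PiLp.inner_apply, RCLike.inner_apply, hv, frameEmbed, mul_comm]
    have hmat : ∑ γ, c γ * G γ β = D α β := by
      have : D * G⁻¹ * G = D := by
        rw [Matrix.mul_assoc, Matrix.nonsing_inv_mul G
          ((Matrix.isUnit_iff_isUnit_det G).mp (hCinv x)), Matrix.mul_one]
      calc ∑ γ, c γ * G γ β = (D * G⁻¹ * G) α β := by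
            simp [hc, Matrix.mul_apply]
        _ = D α β := by rw [this]
    rw [inner_sub_left, hinner, hinnerw, hmat, sub_self]
  -- conclude
  rw [← Submodule.starProjection_apply]
  refine Submodule.eq_starProjection_of_mem_of_inner_eq_zero ?_ ?_
  · exact Submodule.sum_smul_mem _ _ fun γ _ =>
      Submodule.subset_span (Set.mem_range_self γ)
  · intro u hu
    obtain ⟨d, rfl⟩ := (Submodule.mem_span_range_iff_exists_fun ℝ).mp hu
    rw [inner_sum]
    refine Finset.sum_eq_zero fun γ _ => ?_
    rw [real_inner_smul_right, hkey γ, mul_zero]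
end
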